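/- Let a ≤ b and c be positive integers with a, b both odd, and set T(q) = [a]_q · [b]_q · [c]_{q^2}. Then for every integer k ≥ 0, the difference of consecutive coefficients satisfies [q^{k+1}]T(q) − [q^k]T(q) = A(k) − B(k), where A(k) := #{ℓ ∈ ℤ : 0 ≤ ℓ ≤ c − 1 and (k − a + 2)/2 ≤ ℓ ≤ (k + 1)/2} and B(k) := #{ℓ ∈ ℤ : 0 ≤ ℓ ≤ c − 1 and (k − a − b + 2)/2 ≤ ℓ ≤ (k − b + 1)/2}. -/

import Mathlib

open Polynomial

/-- The q-analog `[n]_q = 1 + q + ⋯ + q^(n-1)` as a polynomial in `ℤ[q]`. -/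
noncomputable def qAnalog (n : ℕ) : Polynomial ℤ :=
  ∑ i ∈ Finset.range n, X ^ i

/-- The q-analog `[n]_{q^r} = 1 + q^r + ⋯ + q^(r(n-1))` as a polynomial in `ℤ[q]`. -/
noncomputable def qAnalogPow (n r : ℕ) : Polynomial ℤ :=
  ∑ i ∈ Finset.range n, X ^ (r * i)

/-- A polynomial of degree `d` is symmetric if `c_k = c_{d-k}` for all `0 ≤ k ≤ d`. -/
def IsSymmPoly (P : Polynomial ℤ) : Prop :=
  ∀ k ≤ P.natDegree, P.coeff k = P.coeff (P.natDegree - k)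

/-- A polynomial is unimodal if its coefficient sequence increases up to some
index `M` and decreases afterwards. -/
def IsUnimodalPoly (P : Polynomial ℤ) : Prop :=
  ∃ M : ℕ, (∀ k, k < M → P.coeff k ≤ P.coeff (k + 1)) ∧
    (∀ k, M ≤ k → P.coeff (k + 1) ≤ P.coeff k)


/-!
Since `(1 - q) [b]_q = 1 - q^b`, the difference `[q^(k+1)]T - [q^k]T` equals
`[q^(k+1)]R - [q^(k+1-b)]R` for `R = [a]_q [c]_{q^2}`, the second term being `0` when `k + 1 < b`.
The coefficient `[q^m]R` counts the `ℓ ∈ [0, c - 1]` with `m - a < 2ℓ ≤ m`, which are exactly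
the `ℓ` counted by `A(k)` for `m = k + 1` and by `B(k)` for `m = k + 1 - b`.
-/

open Finset

lemma coeff_qAnalog (n m : ℕ) : (qAnalog n).coeff m = if m < n then 1 else 0 := by
  simp [qAnalog, coeff_X_pow]

lemma one_sub_X_mul_qAnalog (n : ℕ) : (1 - X) * qAnalog n = 1 - X ^ n := by
  rw [qAnalog, mul_comm, geom_sum_mul_neg]

lemma coeff_succ_sub_coeff_qAnalog_mul (n k : ℕ) (P : ℤ[X]) :
    (qAnalog n * P).coeff (k + 1) - (qAnalog n * P).coeff k =
      P.coeff (k + 1) - (X ^ n * P).coeff (k + 1) := by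
  have h := congrArg (coeff · (k + 1)) (congrArg (· * P) (one_sub_X_mul_qAnalog n))
  simp only [mul_assoc, sub_mul, one_mul, coeff_sub, coeff_X_mul] at h
  exact h

lemma coeff_X_pow_mul_qAnalog_mul_qAnalogPow_two (a b c m : ℕ) :
    (X ^ b * (qAnalog a * qAnalogPow c 2)).coeff m =
      (#{i ∈ range c | 2 * i + b ≤ m ∧ m + 1 ≤ 2 * i + b + a} : ℤ) := by
  rw [qAnalogPow, mul_sum, mul_sum, finsetSum_coeff, card_filter]
  push_cast
  refine sum_congr rfl fun i _ => ?_
  rw [show X ^ b * (qAnalog a * X ^ (2 * i)) = qAnalog a * X ^ (2 * i + b) by ring,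
    coeff_mul_X_pow', coeff_qAnalog]
  split_ifs <;> omega

lemma card_filter_Icc_int_eq_card_filter_range (c : ℕ) (p : ℤ → Prop) [DecidablePred p] :
    #{ℓ ∈ Icc (0 : ℤ) (c - 1) | p ℓ} = #((range c).filter fun i : ℕ => p i) := by
  refine card_nbij' Int.toNat (↑) ?_ ?_ ?_ ?_ <;> intro x hx <;> simp_all

theorem coeff_diff_eq_A_sub_B_general (a b c : ℕ) :
    ∀ k : ℕ,
      (qAnalog a * qAnalog b * qAnalogPow c 2).coeff (k + 1) -
        (qAnalog a * qAnalog b * qAnalogPow c 2).coeff k =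
      (((Finset.Icc (0 : ℤ) ((c : ℤ) - 1)).filter (fun ℓ : ℤ =>
          ((k : ℚ) - a + 2) / 2 ≤ (ℓ : ℚ) ∧ (ℓ : ℚ) ≤ ((k : ℚ) + 1) / 2)).card : ℤ) -
      (((Finset.Icc (0 : ℤ) ((c : ℤ) - 1)).filter (fun ℓ : ℤ =>
          ((k : ℚ) - a - b + 2) / 2 ≤ (ℓ : ℚ) ∧
          (ℓ : ℚ) ≤ ((k : ℚ) - b + 1) / 2)).card : ℤ) := by
  intro k
  have hA := coeff_X_pow_mul_qAnalog_mul_qAnalogPow_two a 0 c (k + 1)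
  rw [pow_zero, one_mul] at hA
  rw [mul_right_comm, mul_comm, coeff_succ_sub_coeff_qAnalog_mul, hA,
    coeff_X_pow_mul_qAnalog_mul_qAnalogPow_two, card_filter_Icc_int_eq_card_filter_range,
    card_filter_Icc_int_eq_card_filter_range]
  congr 3 <;> refine filter_congr fun i _ => ?_ <;>
    · rw [Int.cast_natCast, div_le_iff₀ two_pos, le_div_iff₀ two_pos]
      qify
      constructor <;> rintro ⟨h₁, h₂⟩ <;> constructor <;> linarith

theorem coeff_diff_eq_A_sub_B (a b c : ℕ)
    (ha : 1 ≤ a) (hb : 1 ≤ b) (hc : 1 ≤ c) (hab : a ≤ b)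
    (haodd : Odd a) (hbodd : Odd b) :
    ∀ k : ℕ,
      (qAnalog a * qAnalog b * qAnalogPow c 2).coeff (k + 1) -
        (qAnalog a * qAnalog b * qAnalogPow c 2).coeff k =
      (((Finset.Icc (0 : ℤ) ((c : ℤ) - 1)).filter (fun ℓ : ℤ =>
          ((k : ℚ) - a + 2) / 2 ≤ (ℓ : ℚ) ∧ (ℓ : ℚ) ≤ ((k : ℚ) + 1) / 2)).card : ℤ) -
      (((Finset.Icc (0 : ℤ) ((c : ℤ) - 1)).filter (fun ℓ : ℤ =>
          ((k : ℚ) - a - b + 2) / 2 ≤ (ℓ : ℚ) ∧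
          (ℓ : ℚ) ≤ ((k : ℚ) - b + 1) / 2)).card : ℤ) :=
  coeff_diff_eq_A_sub_B_general a b c
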